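/- arXiv:1104.2799 — 2 statements merged into one kernel-verified Lean document; each statement's English description precedes it below -/
import Mathlib

section
/- Consider m = log_t n independent groups, where group j contains at most b·√t Bernoulli trials each with success probability 1/(bt), plus at most b·t Bernoulli trials each with success probability 1/(b·t^{3/2}), all trials independent. Then the expected total number of successes is O(m/√t), and the probability that the total number of successes exceeds C·m (for a suitable constant C) is at most t^{-Ω(m)} = n^{-Ω(1)}. -/
/-!
Each group contributes at most `b√t · 1/(bt) + bt · 1/(bt^{3/2}) = 2/√t` to the expected count,
so the mean is at most `2m/√t`. For the tail, the Chernoff bound at `eᵃ = √t` gives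
`P(N ≥ 6m) ≤ exp (-3m log t + (√t - 1) · 2m/√t) ≤ exp (-(m log t)/2) = n^{-1/2}`, using `log t ≥ 1`.
-/

open MeasureTheory ProbabilityTheory Real Finset

section Chernoff

variable {Ω ι : Type*} [MeasurableSpace Ω] {μ : Measure Ω}

lemma mgf_ite_one_zero [IsProbabilityMeasure μ] {f : Ω → Bool} (hf : Measurable f) (a : ℝ) :
    mgf (fun ω => if f ω = true then (1 : ℝ) else 0) μ a
      = 1 + (exp a - 1) * μ.real {ω | f ω = true} := by
  have hS : MeasurableSet {ω | f ω = true} := hf (measurableSet_singleton true)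
  have hexp : (fun ω => exp (a * if f ω = true then (1 : ℝ) else 0))
      = fun ω => 1 + {ω | f ω = true}.indicator (fun _ => exp a - 1) ω := by
    funext ω
    by_cases h : f ω = true <;> simp [h]
  rw [mgf, hexp, integral_add (integrable_const 1) ((integrable_const _).indicator hS),
    integral_const, integral_indicator_const _ hS]
  simp only [probReal_univ, smul_eq_mul]
  ring

/-- Poisson-regime Chernoff bound: the factor `1 + (eᵃ - 1) pᵢ` that each trial contributes to the
moment generating function of the count is at most `exp ((eᵃ - 1) pᵢ)`. -/
theorem measureReal_le_card_filter_le [Fintype ι] {X : ι → Ω → Bool} (hindep : iIndepFun X μ)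
    (hX : ∀ i, Measurable (X i)) {a : ℝ} (ha : 0 ≤ a) (k : ℝ) :
    μ.real {ω | k ≤ (#{i | X i ω = true} : ℝ)}
      ≤ exp (-a * k + (exp a - 1) * ∑ i, μ.real {ω | X i ω = true}) := by
  have := hindep.isProbabilityMeasure
  set Y : ι → Ω → ℝ := fun i ω => if X i ω = true then 1 else 0
  have hY : ∀ i, Measurable (Y i) := fun i =>
    (measurable_of_finite fun b : Bool => if b = true then (1 : ℝ) else 0).comp (hX i)
  have hYindep : iIndepFun Y μ :=
    hindep.comp (fun _ b => if b = true then (1 : ℝ) else 0) fun _ => measurable_of_finite _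
  have hcount : ∀ ω, (#{i | X i ω = true} : ℝ) = (∑ i, Y i) ω := by
    simp only [Y, Finset.sum_apply, natCast_card_filter, implies_true]
  have hint : Integrable (fun ω => exp (a * (∑ i, Y i) ω)) μ := by
    refine integrable_exp_mul_of_le a (Fintype.card ι) ha (by fun_prop) (ae_of_all _ fun ω => ?_)
    rw [← hcount]
    exact_mod_cast card_le_univ _
  calc μ.real {ω | k ≤ (#{i | X i ω = true} : ℝ)} = μ.real {ω | k ≤ (∑ i, Y i) ω} := by
        simp_rw [hcount]
    _ ≤ exp (-a * k) * mgf (∑ i, Y i) μ a := measure_ge_le_exp_mul_mgf k ha hint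
    _ = exp (-a * k) * ∏ i, (1 + (exp a - 1) * μ.real {ω | X i ω = true}) := by
        rw [hYindep.mgf_sum hY]
        simp only [Y, mgf_ite_one_zero (hX _)]
    _ ≤ exp (-a * k) * ∏ i, exp ((exp a - 1) * μ.real {ω | X i ω = true}) := by
        gcongr
        · exact fun i _ =>
            add_nonneg zero_le_one (mul_nonneg (sub_nonneg.2 (one_le_exp ha)) measureReal_nonneg)
        · exact (add_comm _ _).trans_le (add_one_le_exp _)
    _ = _ := by rw [← exp_sum, ← mul_sum, ← exp_add]

end Chernoff

lemma sum_ite_le_of_card_filter_le {ι : Type*} (S : Finset ι) (s : ι → Bool) {u v A B : ℝ}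
    (hu : 0 ≤ u) (hv : 0 ≤ v) (hA : (#{i ∈ S | s i = true} : ℝ) ≤ A)
    (hB : (#{i ∈ S | s i = false} : ℝ) ≤ B) :
    ∑ i ∈ S, (if s i then u else v) ≤ A * u + B * v := by
  rw [sum_ite, sum_const, sum_const, nsmul_eq_mul, nsmul_eq_mul]
  simp only [Bool.not_eq_true]
  gcongr

lemma sum_probs_le_two_mul_div_sqrt {ι : Type*} [Fintype ι] {m b t : ℕ} (hb : 0 < b) (ht : 0 < t)
    (g : ι → Fin m) (s : ι → Bool)
    (hcard : ∀ j : Fin m,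
      ((univ.filter fun i => g i = j ∧ s i = true).card : ℝ) ≤ (b : ℝ) * √t ∧
      ((univ.filter fun i => g i = j ∧ s i = false).card : ℝ) ≤ (b : ℝ) * t) :
    ∑ i, (if s i then 1 / ((b : ℝ) * t) else 1 / ((b : ℝ) * (t : ℝ) ^ ((3 : ℝ) / 2)))
      ≤ 2 * m / √t := by
  have hb : (0 : ℝ) < b := by exact_mod_cast hb
  have ht : (0 : ℝ) < t := by exact_mod_cast ht
  have hsqrt : (t : ℝ) ^ ((3 : ℝ) / 2) = t * √t := by
    rw [show (3 : ℝ) / 2 = 1 + 1 / 2 by norm_num, rpow_add ht, rpow_one, sqrt_eq_rpow]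
  have hgroup : ∀ j : Fin m, ∑ i with g i = j,
      (if s i then 1 / ((b : ℝ) * t) else 1 / ((b : ℝ) * (t : ℝ) ^ ((3 : ℝ) / 2))) ≤ 2 / √t := by
    intro j
    calc _ ≤ (b * √t) * (1 / (b * t)) + (b * t) * (1 / (b * (t : ℝ) ^ ((3 : ℝ) / 2))) :=
          sum_ite_le_of_card_filter_le _ s (by positivity) (by positivity)
            (by simpa only [filter_filter] using (hcard j).1)
            (by simpa only [filter_filter] using (hcard j).2)
      _ = 2 / √t := by
          rw [hsqrt]
          field_simp
          rw [sq_sqrt ht.le]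
          ring
  calc _ = ∑ j : Fin m, ∑ i with g i = j,
        (if s i then 1 / ((b : ℝ) * t) else 1 / ((b : ℝ) * (t : ℝ) ^ ((3 : ℝ) / 2))) :=
        (sum_fiberwise univ g _).symm
    _ ≤ ∑ _j : Fin m, 2 / √t := sum_le_sum fun j _ => hgroup j
    _ = 2 * m / √t := by simp only [sum_const, card_univ, Fintype.card_fin, nsmul_eq_mul]; ring

lemma chernoff_exponent_le {m t S : ℝ} (ht : 4 ≤ t) (hm : 0 ≤ m) (hS0 : 0 ≤ S)
    (hS : S ≤ 2 * m / √t) :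
    -(log t / 2) * (6 * m) + (exp (log t / 2) - 1) * S ≤ m * log t * -(1 / 2) := by
  have ht0 : 0 < t := by linarith
  have hexp : exp (log t / 2) = √t := by
    rw [sqrt_eq_rpow, rpow_def_of_pos ht0, div_eq_mul_one_div]
  have hlog : 1 ≤ log t := by
    rw [le_log_iff_exp_le ht0]
    linarith [exp_one_lt_d9]
  have hsqrtS : √t * S ≤ 2 * m := by
    rwa [le_div_iff₀' (sqrt_pos.2 ht0)] at hS
  rw [hexp]
  nlinarith

/-- False-positive count along the query path: `m = log_t n` independent groups,
each with at most `b·√t` Bernoulli trials of probability `1/(b·t)` ("top") and at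
most `b·t` trials of probability `1/(b·t^{3/2})` ("bottom"), all independent.
Then the expected total number of successes is `O(m/√t)`, and the total exceeds
`C·m` with probability at most `n^{-Ω(1)}`. -/
theorem stmt_5 :
    ∃ C c : ℝ, 0 < C ∧ 0 < c ∧
      ∀ (Ω ι : Type) (mΩ : MeasurableSpace Ω) (μ : Measure Ω), IsProbabilityMeasure μ →
        ∀ (_ : Fintype ι) (_ : DecidableEq ι) (m b n t : ℕ),
          4 ≤ t → t ≤ n → 0 < b → 0 < m →
          (m : ℝ) = Real.log n / Real.log t →
          ∀ (X : ι → Ω → Bool) (g : ι → Fin m) (s : ι → Bool) (p : ι → ℝ),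
            (∀ i, p i = if s i then 1 / ((b : ℝ) * t) else 1 / ((b : ℝ) * (t : ℝ) ^ ((3 : ℝ) / 2))) →
            iIndepFun X μ →
            (∀ i, Measurable (X i)) →
            (∀ i, μ {ω | X i ω = true} = ENNReal.ofReal (p i)) →
            (∀ j : Fin m,
              ((Finset.univ.filter fun i => g i = j ∧ s i = true).card : ℝ) ≤ (b : ℝ) * Real.sqrt t ∧
              ((Finset.univ.filter fun i => g i = j ∧ s i = false).card : ℝ) ≤ (b : ℝ) * t) →
            (∑ i, p i) ≤ C * m / Real.sqrt t ∧
            μ {ω | C * m < ((Finset.univ.filter fun i => X i ω = true).card : ℝ)}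
              ≤ ENNReal.ofReal ((n : ℝ) ^ (-c)) := by
  refine ⟨6, 1 / 2, by norm_num, by norm_num, ?_⟩
  intro Ω ι _ μ _ _ _ m b n t ht htn hb _ hmlog X g s p hp hindep hXmeas hX hcard
  have hp0 : ∀ i, 0 ≤ p i := fun i => by rw [hp i]; split <;> positivity
  have hsum : ∑ i, p i ≤ 2 * m / √t :=
    (sum_congr rfl fun i _ => hp i).trans_le (sum_probs_le_two_mul_div_sqrt hb (by omega) g s hcard)
  refine ⟨hsum.trans (by gcongr; norm_num), ?_⟩
  have hprob : ∀ i, μ.real {ω | X i ω = true} = p i := fun i => by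
    rw [measureReal_def, hX i, ENNReal.toReal_ofReal (hp0 i)]
  have ht4 : (4 : ℝ) ≤ t := by exact_mod_cast ht
  have hlogn : log n = m * log t := by
    rw [hmlog, div_mul_cancel₀ _ (log_pos (by linarith)).ne']
  have hchernoff := measureReal_le_card_filter_le hindep hXmeas
    (a := log t / 2) (by positivity [log_nonneg (by linarith : (1 : ℝ) ≤ t)]) (6 * m)
  rw [← ofReal_measureReal]
  calc ENNReal.ofReal (μ.real {ω | 6 * m < (#{i | X i ω = true} : ℝ)})
      ≤ ENNReal.ofReal (μ.real {ω | 6 * m ≤ (#{i | X i ω = true} : ℝ)}) :=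
        ENNReal.ofReal_le_ofReal (measureReal_mono (Set.ofPred_subset_ofPred.2 fun _ => le_of_lt))
    _ ≤ ENNReal.ofReal ((n : ℝ) ^ (-(1 / 2) : ℝ)) := by
        refine ENNReal.ofReal_le_ofReal (hchernoff.trans ?_)
        rw [rpow_def_of_pos (by norm_cast; omega), hlogn, exp_le_exp]
        simp only [hprob]
        exact chernoff_exponent_le ht4 m.cast_nonneg (sum_nonneg fun i _ => hp0 i) hsum
end

section
/- Fix λ ≥ 2 and n, and for a uniformly random query position define epochs of sizes λ^1, λ^2, ... going back in time. For a single (read,write) pair with write time w < read time r, the event that the write falls in epoch i while the read falls in an epoch j < i has probability at most min(2λ^{i−1}, r−w)/(n/2), and this probability is 0 unless r − w < 2λ^i. Consequently, summing the contribution of this pair over all i weighted by λ^{-i} gives at most O(1/(nλ)). -/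
/-!
Relative to the query position `t`, epoch `i` is `(t - s i, t - s (i - 1)]` with
`s k = λ + ⋯ + λ^k < 2λ^k`. The event "`w` in epoch `i`, `r ≤ t` in a later epoch" puts the
boundary `t - s (i - 1)` into `[w, r)` and `t` into `[r, r + s (i - 1))`, so at most
`min (2λ^{i-1}, r - w)` positions `t` are favourable; it also forces `r - w < s i < 2λ^i`.
For the weighted sum let `i₀` be least with `r - w < 2λ^{i₀}`: epochs below `i₀` contribute
nothing, epoch `i₀` contributes `O(λ^{i₀-1}/λ^{i₀})`, and epoch `i₀ + k` with `k ≥ 1` at most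
`(r - w)/λ^{i₀+k} < 2λ^{-k}`, a geometric tail.
-/

open Finset

def epochDepth (lam : ℕ) (k : ℕ) : ℤ := ∑ j ∈ Icc 1 k, (lam : ℤ) ^ j

section epochDepth

variable {lam : ℕ}

@[simp]
lemma epochDepth_zero : epochDepth lam 0 = 0 := by simp [epochDepth]

lemma epochDepth_succ (k : ℕ) :
    epochDepth lam (k + 1) = epochDepth lam k + (lam : ℤ) ^ (k + 1) :=
  sum_Icc_succ_top (by omega) _

lemma epochDepth_nonneg (k : ℕ) : 0 ≤ epochDepth lam k :=
  sum_nonneg fun _ _ => by positivity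

lemma epochDepth_lt_two_mul_pow (hlam : 2 ≤ lam) (k : ℕ) :
    epochDepth lam k < 2 * (lam : ℤ) ^ k := by
  induction k with
  | zero => simp
  | succ k ih =>
    have hpow : 2 * (lam : ℤ) ^ k ≤ (lam : ℤ) ^ (k + 1) := by
      rw [pow_succ, mul_comm]; gcongr; exact_mod_cast hlam
    rw [epochDepth_succ]
    linarith

end epochDepth

lemma Int.card_le_sub_of_subset_Ico {S : Finset ℤ} {a b : ℤ} (hab : a ≤ b) (h : S ⊆ Ico a b) :
    (#S : ℤ) ≤ b - a := by
  have := card_le_card h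
  rw [Int.card_Ico] at this
  omega

/-- The positions `t ∈ T` for which `w` lies in epoch `i` and `r ≤ t` in an epoch `j < i`. -/
def crossingEvent (T : Finset ℤ) (lam : ℕ) (w r : ℤ) (i : ℕ) : Finset ℤ :=
  T.filter fun t => t - epochDepth lam i < w ∧ w ≤ t - epochDepth lam (i - 1) ∧
    t - epochDepth lam (i - 1) < r ∧ r ≤ t

section crossingEvent

variable {T : Finset ℤ} {lam : ℕ} {w r : ℤ}

lemma crossingEvent_zero : crossingEvent T lam w r 0 = ∅ :=
  filter_false_of_mem fun _ _ h => (h.1.trans_le h.2.1).false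

lemma crossingEvent_eq_empty (hlam : 2 ≤ lam) {i : ℕ} (h : 2 * (lam : ℤ) ^ i ≤ r - w) :
    crossingEvent T lam w r i = ∅ :=
  filter_false_of_mem fun t _ ht => by
    linarith [ht.1, ht.2.2.2, epochDepth_lt_two_mul_pow hlam i]

lemma card_crossingEvent_le_sub (hwr : w ≤ r) (i : ℕ) :
    (#(crossingEvent T lam w r i) : ℤ) ≤ r - w := by
  refine (Int.card_le_sub_of_subset_Ico (a := w + epochDepth lam (i - 1))
    (b := r + epochDepth lam (i - 1)) (by omega) fun t ht => ?_).trans_eq (by ring)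
  simp only [crossingEvent, mem_filter] at ht
  rw [mem_Ico]
  omega

lemma card_crossingEvent_le_epochDepth (i : ℕ) :
    (#(crossingEvent T lam w r i) : ℤ) ≤ epochDepth lam (i - 1) := by
  refine (Int.card_le_sub_of_subset_Ico (a := r) (b := r + epochDepth lam (i - 1))
    (le_add_of_nonneg_right (epochDepth_nonneg _)) fun t ht => ?_).trans_eq (by ring)
  simp only [crossingEvent, mem_filter] at ht
  rw [mem_Ico]
  omega

lemma card_crossingEvent_le_min (hlam : 2 ≤ lam) (hwr : w ≤ r) (i : ℕ) :
    (#(crossingEvent T lam w r i) : ℝ) ≤ min (2 * (lam : ℝ) ^ (i - 1)) ((r : ℝ) - w) := by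
  have h₁ := (card_crossingEvent_le_epochDepth (T := T) (w := w) (r := r) i).trans
    (epochDepth_lt_two_mul_pow hlam (i - 1)).le
  have h₂ := card_crossingEvent_le_sub (T := T) (lam := lam) hwr i
  exact le_min (by exact_mod_cast h₁) (by exact_mod_cast h₂)

end crossingEvent

lemma sum_le_two_mul_of_le_geometric {f : ℕ → ℝ} {a : ℝ} {i₀ : ℕ} (hf : ∀ i, 0 ≤ f i)
    (hf_zero : ∀ i < i₀, f i = 0) (hf_le : ∀ k, f (i₀ + k) ≤ a * (1 / 2) ^ k)
    (s : Finset ℕ) :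
    ∑ i ∈ s, f i ≤ 2 * a := by
  have hshift : Summable fun k => f (k + i₀) :=
    (summable_geometric_two.mul_left a).of_nonneg_of_le (fun _ => hf _)
      fun k => add_comm k i₀ ▸ hf_le k
  have hsum : Summable f := (summable_nat_add_iff i₀).mp hshift
  calc ∑ i ∈ s, f i ≤ ∑' i, f i := hsum.sum_le_tsum s fun i _ => hf i
    _ = ∑' k, f (k + i₀) := by
      rw [← hsum.sum_add_tsum_nat_add i₀, sum_eq_zero fun i hi => hf_zero i (mem_range.mp hi),
        zero_add]
    _ ≤ ∑' k, a * (1 / 2) ^ k :=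
      hshift.tsum_le_tsum (fun k => add_comm k i₀ ▸ hf_le k) (summable_geometric_two.mul_left a)
    _ = 2 * a := by rw [tsum_mul_left, tsum_geometric_two, mul_comm]

lemma min_mul_inv_pow_le {lam D : ℝ} (hlam : 2 ≤ lam) {i₀ : ℕ} (hD : D ≤ 2 * lam ^ i₀) {k : ℕ}
    (hk : 1 ≤ i₀ + k) :
    min (2 * lam ^ (i₀ + k - 1)) D * (lam ^ (i₀ + k))⁻¹ ≤ 4 / lam * (1 / 2) ^ k := by
  have hlam0 : 0 < lam := by linarith
  rcases k with _ | m
  · obtain ⟨j, rfl⟩ : ∃ j, i₀ = j + 1 := ⟨i₀ - 1, by omega⟩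
    calc min (2 * lam ^ (j + 1 + 0 - 1)) D * (lam ^ (j + 1 + 0))⁻¹
        ≤ 2 * lam ^ j * (lam ^ (j + 1))⁻¹ := by gcongr; exact min_le_left _ _
      _ = 2 / lam := by field_simp; ring
      _ ≤ 4 / lam * (1 / 2) ^ 0 := by rw [pow_zero, mul_one]; gcongr; norm_num
  · have h2m : (2 : ℝ) ^ m ≤ lam ^ m := pow_le_pow_left₀ (by norm_num) hlam m
    calc min (2 * lam ^ (i₀ + (m + 1) - 1)) D * (lam ^ (i₀ + (m + 1)))⁻¹
        ≤ 2 * lam ^ i₀ * (lam ^ (i₀ + (m + 1)))⁻¹ := by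
          gcongr; exact (min_le_right _ _).trans hD
      _ = 2 / lam * (lam ^ m)⁻¹ := by rw [pow_add, pow_succ]; field_simp
      _ ≤ 2 / lam * (2 ^ m)⁻¹ := by gcongr
      _ = 4 / lam * (1 / 2) ^ (m + 1) := by rw [one_div, inv_pow, pow_succ]; ring

lemma sum_mul_inv_pow_le {lam c D : ℝ} (hlam : 2 ≤ lam) (hc : 0 < c) {x : ℕ → ℝ}
    (hx : ∀ i, 0 ≤ x i) (hx_zero : x 0 = 0) (hx_vanish : ∀ i, 2 * lam ^ i ≤ D → x i = 0)
    (hx_le : ∀ i, 1 ≤ i → x i ≤ min (2 * lam ^ (i - 1)) D / c) (s : Finset ℕ) :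
    ∑ i ∈ s, x i * (lam ^ i)⁻¹ ≤ 8 / (c * lam) := by
  have hlam0 : 0 < lam := by linarith
  have hex : ∃ i, D < 2 * lam ^ i := by
    obtain ⟨i, hi⟩ := pow_unbounded_of_one_lt (D / 2) (by linarith : 1 < lam)
    exact ⟨i, by linarith⟩
  classical
  set i₀ := Nat.find hex
  have hD : D ≤ 2 * lam ^ i₀ := (Nat.find_spec hex).le
  refine (sum_le_two_mul_of_le_geometric (f := fun i => x i * (lam ^ i)⁻¹)
    (a := 4 / (c * lam)) (i₀ := i₀) (fun i => mul_nonneg (hx i) (by positivity))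
    (fun i hi => by rw [hx_vanish i (not_lt.mp (Nat.find_min hex hi)), zero_mul])
    (fun k => ?_) s).trans_eq (by ring)
  rcases Nat.eq_zero_or_pos (i₀ + k) with hk | hk
  · rw [hk, hx_zero, zero_mul]; positivity
  calc x (i₀ + k) * (lam ^ (i₀ + k))⁻¹
      ≤ min (2 * lam ^ (i₀ + k - 1)) D / c * (lam ^ (i₀ + k))⁻¹ := by
        gcongr; exact hx_le _ hk
    _ = min (2 * lam ^ (i₀ + k - 1)) D * (lam ^ (i₀ + k))⁻¹ / c := by ring
    _ ≤ 4 / lam * (1 / 2) ^ k / c :=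
      div_le_div_of_nonneg_right (min_mul_inv_pow_le hlam hD hk) hc.le
    _ = 4 / (c * lam) * (1 / 2) ^ k := by field_simp

/-- Per-pair epoch estimate. The query position `t` is uniform over a set `T` of at
least `n/2` positions; relative to `t`, epoch `i` consists of the `λ^i` updates in
`(t − s i, t − s (i−1)]` where `s k = ∑_{j=1}^k λ^j`. For a write time `w` and a
later read time `r ≤ t`, the event that `w` falls in epoch `i` while `r` falls in an
epoch `j < i` (i.e. the boundary `t − s (i−1)` lies in `[w, r)`) has probability at
most `min(2λ^{i−1}, r−w)/(n/2)`, is impossible unless `r − w < 2λ^i`, and summing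
the contributions over all `i` weighted by `λ^{-i}` gives at most `O(1/(nλ))`. -/
theorem stmt_11 :
    ∃ C : ℝ, 0 < C ∧
      ∀ (lam n : ℕ), 2 ≤ lam → 1 ≤ n →
        ∀ (w r : ℤ), w < r →
          ∀ (T : Finset ℤ), (n : ℝ) / 2 ≤ T.card →
            ∀ (s : ℕ → ℤ), (∀ k, s k = ∑ j ∈ Finset.Icc 1 k, (lam : ℤ) ^ j) →
              ∀ (E : ℕ → Finset ℤ),
                (∀ i, E i = T.filter fun t =>
                    t - s i < w ∧ w ≤ t - s (i - 1) ∧ t - s (i - 1) < r ∧ r ≤ t) →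
                (∀ i : ℕ, 1 ≤ i →
                    ((E i).card : ℝ) / T.card
                      ≤ min (2 * (lam : ℝ) ^ (i - 1)) ((r : ℝ) - w) / ((n : ℝ) / 2)) ∧
                (∀ i : ℕ, 1 ≤ i → 2 * (lam : ℝ) ^ i ≤ (r : ℝ) - w → E i = ∅) ∧
                ∀ K : ℕ,
                  ∑ i ∈ Finset.Icc 1 K, (((E i).card : ℝ) / T.card) * ((lam : ℝ) ^ i)⁻¹
                    ≤ C / ((n : ℝ) * lam) := by
  refine ⟨16, by norm_num, fun lam n hlam hn w r hwr T hT s hs E hE => ?_⟩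
  obtain rfl : s = epochDepth lam := funext hs
  obtain rfl : E = crossingEvent T lam w r := funext hE
  have hn2 : (0 : ℝ) < n / 2 := by positivity
  have hprob : ∀ i, ((crossingEvent T lam w r i).card : ℝ) / T.card
      ≤ min (2 * (lam : ℝ) ^ (i - 1)) ((r : ℝ) - w) / ((n : ℝ) / 2) := fun i =>
    have hcard := card_crossingEvent_le_min (T := T) hlam hwr.le i
    div_le_div₀ ((Nat.cast_nonneg _).trans hcard) hcard hn2 hT
  have hempty : ∀ i, 2 * (lam : ℝ) ^ i ≤ (r : ℝ) - w → crossingEvent T lam w r i = ∅ :=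
    fun i h => crossingEvent_eq_empty hlam (by exact_mod_cast h)
  refine ⟨fun i _ => hprob i, fun i _ => hempty i, fun K => ?_⟩
  calc _ ≤ 8 / ((n : ℝ) / 2 * lam) :=
        sum_mul_inv_pow_le (by exact_mod_cast hlam) hn2 (fun i => by positivity)
          (by simp [crossingEvent_zero]) (fun i h => by simp [hempty i h])
          (fun i _ => hprob i) _
    _ = 16 / ((n : ℝ) * lam) := by field_simp; norm_num
end
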